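/- arXiv:2207.11663 — 2 statements merged into one kernel-verified Lean document; each statement's English description precedes it below -/
import Mathlib

section
/- Let d, r', r'' be positive integers, k ∈ ℤ_{++}^{r'}, l ∈ ℤ_{++}^{r''}, and let R be the unique polynomial in ℂ[X] with R · ∏_{i=1}^{r'+1}∏_{j=1}^{r''+1}(X − d(i+j−2)/2)_{k_i+l_j} = (X)_{φ₀(k,l),d} · ∏_{i=1}^{r'}∏_{j=1}^{r''}(X − d(i+j−1)/2)_{k_i+l_j}. Suppose 1 ≤ m₁' ≤ m₂' ≤ r', 1 ≤ m₁'' ≤ m₂'' ≤ r'', k₁ = ⋯ = k_{m₁'}, l₁ = ⋯ = l_{m₁''}, and k_{m₂'+1} = l_{m₂''+1} = 0 (conventions k_{r'+1} = l_{r''+1} = 0). Then: (i) if k₁ ≥ 1 and l₁ ≥ 1, every zero λ ∈ ℂ of R is real and satisfies (d/2)·max{m₁', m₁''} − (k₁+l₁) + 1 ≤ λ ≤ (d/2)(m₂'+m₂''−1) − max{k_{m₂'}, l_{m₂''}}; (ii) if k₁ = 0 or l₁ = 0, then R is the constant polynomial 1. Moreover, for m = 1, …, r'+r''−1, if φ₀(k,l)_{m+1}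 = 0 and φ₀(k,l)_m ≠ 0, then at λ = dm/2 the numerator ∏_{i=1}^{r'}∏_{j=1}^{r''}(λ − d(i+j−1)/2)_{k_i+l_j} and the denominator ∏_{i=1}^{r'+1}∏_{j=1}^{r''+1}(λ − d(i+j−2)/2)_{k_i+l_j} of C₀^d vanish to the same order (so C₀^d is nonzero holomorphic there), while at λ = d(m−1)/2 the denominator vanishes to strictly higher order than the numerator (so C₀^d has a pole there). -/
/-!
Every polynomial involved is a product of linear factors `X - (d s / 2 - t)` with `t : ℕ`.
Grouping the factors by the starting point `d s / 2` of their Pochhammer symbol splits `denom0`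
and `numer0` along the antidiagonals `i + j = s + 2` and `i + j = s + 1`, whose lengths
`k i + l j` interlace. A root `z = d s / 2 - t` of `R` is counted more often by
`(X)_{φ₀,d} · numer0` than by `denom0` on some antidiagonal `s`. As `φ₀` is the least length on
that antidiagonal, this forces a place where `l` strictly descends and a later one where `k` does,
with the lengths around both straddling `t`; the shape of `k` and `l` then bounds `s` and `t`.

If `φ₀(k,l)_{m+1} = 0`, then `k i = l j = 0` for some `i + j = m + 2`, and on every antidiagonal
`s ≥ m` the factors of the numerator and of the denominator coincide. The antidiagonals `s < m`
have no root at `d m / 2`, while on `s = m - 1` all denominator factors (of length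
`≥ φ₀(k,l)_m > 0`) vanish at `d (m - 1) / 2`, one more than the numerator factors.
-/

open Polynomial Finset

/-- `(X - c)_m := ∏_{t=0}^{m-1} (X - c + t)` in `ℂ[X]`. -/
noncomputable def pochPoly (c : ℂ) (m : ℕ) : Polynomial ℂ :=
  ∏ t ∈ Finset.range m, (Polynomial.X - Polynomial.C c + (t : Polynomial ℂ))

/-- `φ₀(k,l)_a := min{k_i + l_j : 1 ≤ i ≤ r'+1, 1 ≤ j ≤ r''+1, i+j = a+1}`. -/
noncomputable def phi0 (r' r'' : ℕ) (k l : ℕ → ℕ) (a : ℕ) : ℕ :=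
  sInf {m : ℕ | ∃ i j : ℕ, 1 ≤ i ∧ i ≤ r' + 1 ∧ 1 ≤ j ∧ j ≤ r'' + 1 ∧
    i + j = a + 1 ∧ m = k i + l j}

/-- The denominator `∏_{i=1}^{r'+1}∏_{j=1}^{r''+1}(X − d(i+j−2)/2)_{k_i+l_j}` of `C₀^d`. -/
noncomputable def denom0 (d r' r'' : ℕ) (k l : ℕ → ℕ) : Polynomial ℂ :=
  ∏ i ∈ Finset.Icc 1 (r' + 1), ∏ j ∈ Finset.Icc 1 (r'' + 1),
    pochPoly ((d : ℂ) * ((i : ℂ) + (j : ℂ) - 2) / 2) (k i + l j)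

/-- The numerator `∏_{i=1}^{r'}∏_{j=1}^{r''}(X − d(i+j−1)/2)_{k_i+l_j}` of `C₀^d`. -/
noncomputable def numer0 (d r' r'' : ℕ) (k l : ℕ → ℕ) : Polynomial ℂ :=
  ∏ i ∈ Finset.Icc 1 r', ∏ j ∈ Finset.Icc 1 r'',
    pochPoly ((d : ℂ) * ((i : ℂ) + (j : ℂ) - 1) / 2) (k i + l j)

/-- The polynomial `(X)_{φ₀(k,l),d} = ∏_{a=1}^{r'+r''}(X − d(a−1)/2)_{φ₀(k,l)_a}`. -/
noncomputable def phiPoly0 (d r' r'' : ℕ) (k l : ℕ → ℕ) : Polynomial ℂ :=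
  ∏ a ∈ Finset.Icc 1 (r' + r''),
    pochPoly ((d : ℂ) * ((a : ℂ) - 1) / 2) (phi0 r' r'' k l a)

theorem Finset.exists_lt_lt_of_sum_Icc_lt_sum_Ico (e f : ℕ → ℕ) {a b : ℕ}
    (h : ∑ i ∈ Icc a b, e i < ∑ i ∈ Ico a b, f i) :
    ∃ i₁ i₂, a ≤ i₁ ∧ i₁ ≤ i₂ ∧ i₂ < b ∧ e i₁ < f i₁ ∧ e (i₂ + 1) < f i₂ := by
  induction h' : b - a generalizing a with
  | zero => simp [Ico_eq_empty_of_le (show b ≤ a by omega)] at h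
  | succ n ih =>
    have hab : a < b := by omega
    rw [← Ico_add_one_right_eq_Icc, sum_eq_sum_Ico_succ_bot (by omega),
      sum_eq_sum_Ico_succ_bot hab] at h
    by_cases hfa : f a ≤ e a
    · obtain ⟨i₁, i₂, h₁, h₁₂, h₂, hlt₁, hlt₂⟩ :=
        ih (a := a + 1) (by rw [← Ico_add_one_right_eq_Icc]; omega) (by omega)
      exact ⟨i₁, i₂, by omega, h₁₂, h₂, hlt₁, hlt₂⟩
    · have hshift : ∑ i ∈ Ico a b, e (i + 1) < ∑ i ∈ Ico a b, f i := by
        rw [sum_Ico_add' e a b 1, sum_eq_sum_Ico_succ_bot hab]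
        omega
      obtain ⟨i₂, hi₂, hlt₂⟩ := exists_lt_of_sum_lt hshift
      rw [mem_Ico] at hi₂
      exact ⟨a, i₂, le_rfl, hi₂.1, hi₂.2, by omega, hlt₂⟩

theorem Finset.prod_Ico_eq_prod_Icc_of_eq_one {M : Type*} [CommMonoid M] (f g : ℕ → M)
    {a p b : ℕ} (hap : a ≤ p) (hpb : p ≤ b) (hgp : g p = 1)
    (hlow : ∀ i, a ≤ i → i < p → f i = g i) (hhigh : ∀ i, p ≤ i → i < b → f i = g (i + 1)) :
    ∏ i ∈ Ico a b, f i = ∏ i ∈ Icc a b, g i := by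
  induction b, hpb using Nat.le_induction with
  | base =>
    rw [← Ico_add_one_right_eq_Icc, prod_Ico_succ_top hap, hgp, mul_one]
    exact prod_congr rfl fun i hi => hlow i (mem_Ico.mp hi).1 (mem_Ico.mp hi).2
  | succ b hpb ih =>
    rw [prod_Ico_succ_top (by omega), ih fun i h₁ h₂ => hhigh i h₁ (by omega),
      hhigh b hpb (by omega), ← Ico_add_one_right_eq_Icc, ← Ico_add_one_right_eq_Icc,
      prod_Ico_succ_top (by omega : a ≤ b + 1)]

theorem Finset.prod_Icc_prod_Icc_eq_prod_prod_diag {M : Type*} [CommMonoid M]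
    (F : ℕ → ℕ → M) {I J c : ℕ} (hc : c ≤ 2) {S : Finset ℕ} {T : ℕ → Finset ℕ}
    (hS : ∀ i j, 1 ≤ i → i ≤ I → 1 ≤ j → j ≤ J → i + j - c ∈ S)
    (hT : ∀ s ∈ S, ∀ i, i ∈ T s ↔ 1 ≤ i ∧ i ≤ I ∧ i < s + c ∧ s + c ≤ i + J) :
    ∏ i ∈ Icc 1 I, ∏ j ∈ Icc 1 J, F i j = ∏ s ∈ S, ∏ i ∈ T s, F i (s + c - i) := by
  rw [← prod_product', ← prod_fiberwise_of_maps_to (g := fun p => p.1 + p.2 - c) (t := S)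
    fun p hp => by
      simp only [mem_product, mem_Icc] at hp
      exact hS _ _ hp.1.1 hp.1.2 hp.2.1 hp.2.2]
  refine prod_congr rfl fun s hs => prod_nbij' Prod.fst (fun i => (i, s + c - i)) ?_ ?_ ?_ ?_ ?_
  · intro p hp
    simp only [mem_filter, mem_product, mem_Icc] at hp
    simp only [hT s hs]
    omega
  · intro i hi
    simp only [hT s hs] at hi
    simp only [mem_filter, mem_product, mem_Icc]
    omega
  · intro p hp
    simp only [mem_filter, mem_product, mem_Icc] at hp
    exact Prod.ext rfl (by dsimp only; omega)
  · exact fun _ _ => rfl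
  · intro p hp
    simp only [mem_filter, mem_product, mem_Icc] at hp
    congr 1
    omega

theorem Polynomial.rootMultiplicity_prod {ι R : Type*} [CommRing R] [IsDomain R]
    (s : Finset ι) (f : ι → R[X]) (h : ∏ i ∈ s, f i ≠ 0) (z : R) :
    rootMultiplicity z (∏ i ∈ s, f i) = ∑ i ∈ s, rootMultiplicity z (f i) := by
  classical
  simp only [← count_roots, roots_prod f s h, Multiset.count_bind]
  rfl

theorem Polynomial.Monic.eq_one_of_forall_not_isRoot {K : Type*} [Field K] [IsAlgClosed K]
    {p : K[X]} (hp : p.Monic) (h : ∀ z, ¬p.IsRoot z) : p = 1 := by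
  refine hp.natDegree_eq_zero.mp (by_contra fun hdeg => ?_)
  obtain ⟨z, hz⟩ := IsAlgClosed.exists_root p fun h0 =>
    hdeg (natDegree_eq_zero_iff_degree_le_zero.mpr h0.le)
  exact h z hz

section Pochhammer

theorem pochPoly_eq_prod_X_sub_C (c : ℂ) (w : ℕ) :
    pochPoly c w = ∏ t ∈ range w, (X - C (c - t)) := by
  refine prod_congr rfl fun t _ => ?_
  rw [C_sub, ← map_natCast C]
  ring

theorem pochPoly_monic (c : ℂ) (w : ℕ) : (pochPoly c w).Monic := by
  rw [pochPoly_eq_prod_X_sub_C]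
  exact monic_prod_of_monic _ _ fun t _ => monic_X_sub_C _

@[simp]
theorem pochPoly_zero (c : ℂ) : pochPoly c 0 = 1 := prod_range_zero _

theorem rootMultiplicity_pochPoly (z c : ℂ) (w : ℕ) :
    rootMultiplicity z (pochPoly c w) = if ∃ t < w, z = c - t then 1 else 0 := by
  classical
  have hinj : Function.Injective fun t : ℕ => c - t := fun a b h => by simpa using h
  have hprod : pochPoly c w =
      (((Multiset.range w).map fun t : ℕ => c - t).map fun a => X - C a).prod := by
    rw [pochPoly_eq_prod_X_sub_C, Multiset.map_map]; rfl
  rw [← count_roots, hprod, roots_multiset_prod_X_sub_C,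
    Multiset.count_eq_of_nodup ((Multiset.nodup_range w).map hinj)]
  simp [eq_comm]

theorem rootMultiplicity_pochPoly_le_one (z c : ℂ) (w : ℕ) :
    rootMultiplicity z (pochPoly c w) ≤ 1 := by
  rw [rootMultiplicity_pochPoly]; split_ifs <;> omega

theorem rootMultiplicity_pochPoly_sub_natCast (c : ℂ) (t w : ℕ) :
    rootMultiplicity (c - t) (pochPoly c w) = if t < w then 1 else 0 := by
  simp [rootMultiplicity_pochPoly]

theorem exists_eq_sub_of_rootMultiplicity_pochPoly_pos {z c : ℂ} {w : ℕ}
    (h : 0 < rootMultiplicity z (pochPoly c w)) : ∃ t : ℕ, z = c - t := by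
  rw [rootMultiplicity_pochPoly] at h
  split_ifs at h with ht
  · obtain ⟨t, -, rfl⟩ := ht; exact ⟨t, rfl⟩
  · omega

theorem rootMultiplicity_prod_pochPoly {ι : Type*} (s : Finset ι) (c : ι → ℂ) (w : ι → ℕ)
    (z : ℂ) :
    rootMultiplicity z (∏ i ∈ s, pochPoly (c i) (w i)) =
      ∑ i ∈ s, rootMultiplicity z (pochPoly (c i) (w i)) :=
  rootMultiplicity_prod s _ (monic_prod_of_monic _ _ fun _ _ => pochPoly_monic _ _).ne_zero z

theorem rootMultiplicity_prod_pochPoly_eq_zero_of_lt {ι : Type*} (I : Finset ι) (w : ι → ℕ)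
    {d m s : ℕ} (hd : 0 < d) (hsm : s < m) :
    rootMultiplicity ((d : ℂ) * m / 2) (∏ i ∈ I, pochPoly ((d : ℂ) * s / 2) (w i)) = 0 := by
  rw [rootMultiplicity_prod_pochPoly]
  refine sum_eq_zero fun i _ => ?_
  rw [rootMultiplicity_pochPoly, if_neg]
  rintro ⟨t, -, ht⟩
  have : ((d * m + 2 * t : ℕ) : ℂ) = (d * s : ℕ) := by push_cast; linear_combination 2 * ht
  have : d * m + 2 * t = d * s := by exact_mod_cast this
  nlinarith

end Pochhammer

section Antitone

variable {k : ℕ → ℕ}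

theorem antitoneOn_Icc_one_add_one {r : ℕ} (hk : AntitoneOn k (Set.Icc 1 r))
    (hk0 : k (r + 1) = 0) : AntitoneOn k (Set.Icc 1 (r + 1)) := by
  intro i hi j hj hij
  simp only [Set.mem_Icc] at hi hj
  rcases eq_or_lt_of_le hj.2 with rfl | hjr
  · rw [hk0]; exact Nat.zero_le _
  · exact hk ⟨hi.1, by omega⟩ ⟨hj.1, by omega⟩ hij

theorem AntitoneOn.eq_zero_of_le {n i j : ℕ} (hk : AntitoneOn k (Set.Icc 1 n)) (hi : 1 ≤ i)
    (hij : i ≤ j) (hj : j ≤ n) (hki : k i = 0) : k j = 0 :=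
  Nat.eq_zero_of_le_zero (hki ▸ hk ⟨hi, by omega⟩ ⟨by omega, hj⟩ hij)

theorem AntitoneOn.mem_Icc_of_apply_add_one_lt {n m₁ m₂ i : ℕ} (hk : AntitoneOn k (Set.Icc 1 n))
    (hkc : ∀ a, 1 ≤ a → a ≤ m₁ → k a = k 1) (hk2 : k (m₂ + 1) = 0) (hi : 1 ≤ i) (hin : i ≤ n)
    (hdrop : k (i + 1) < k i) : i ∈ Set.Icc m₁ m₂ := by
  constructor
  · by_contra! h
    have := hkc i hi (by omega)
    have := hkc (i + 1) (by omega) h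
    omega
  · by_contra! h
    have := hk.eq_zero_of_le (by omega) h hin hk2
    omega

end Antitone

section Diagonals

variable (d r' r'' : ℕ) (k l : ℕ → ℕ)

/-- The factors of `denom0` whose Pochhammer symbol starts at `d s / 2`, i.e. those of the pairs
`(i, s + 2 - i)`. -/
noncomputable def denomDiag (s : ℕ) : ℂ[X] :=
  ∏ i ∈ Icc (max 1 (s + 1 - r'')) (min (s + 1) (r' + 1)),
    pochPoly ((d : ℂ) * s / 2) (k i + l (s + 2 - i))

/-- The factors of `numer0` whose Pochhammer symbol starts at `d s / 2`, i.e. those of the pairs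
`(i, s + 1 - i)`; the pair `(i, s + 1 - i)` sits between the pairs `(i, s + 2 - i)` and
`(i + 1, s + 1 - i)` of `denomDiag`. -/
noncomputable def numerDiag (s : ℕ) : ℂ[X] :=
  ∏ i ∈ Ico (max 1 (s + 1 - r'')) (min (s + 1) (r' + 1)),
    pochPoly ((d : ℂ) * s / 2) (k i + l (s + 1 - i))

theorem denom0_eq_prod_denomDiag :
    denom0 d r' r'' k l = ∏ s ∈ range (r' + r'' + 1), denomDiag d r' r'' k l s := by
  rw [denom0, prod_Icc_prod_Icc_eq_prod_prod_diag _ le_rfl (S := range (r' + r'' + 1))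
    (T := fun s => Icc (max 1 (s + 1 - r'')) (min (s + 1) (r' + 1)))
    (fun i j _ _ _ _ => mem_range.mpr (by omega)) (fun s _ i => by simp only [mem_Icc]; omega)]
  refine prod_congr rfl fun s _ => prod_congr rfl fun i hi => ?_
  rw [mem_Icc] at hi
  push_cast [Nat.cast_sub (show i ≤ s + 2 by omega)]
  ring_nf

theorem numer0_eq_prod_numerDiag :
    numer0 d r' r'' k l = ∏ s ∈ range (r' + r'' + 1), numerDiag d r' r'' k l s := by
  rw [numer0, prod_Icc_prod_Icc_eq_prod_prod_diag _ one_le_two (S := range (r' + r'' + 1))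
    (T := fun s => Ico (max 1 (s + 1 - r'')) (min (s + 1) (r' + 1)))
    (fun i j _ _ _ _ => mem_range.mpr (by omega)) (fun s _ i => by simp only [mem_Ico]; omega)]
  refine prod_congr rfl fun s _ => prod_congr rfl fun i hi => ?_
  rw [mem_Ico] at hi
  push_cast [Nat.cast_sub (show i ≤ s + 1 by omega)]
  ring_nf

theorem phi0_le {a i j : ℕ} (hi : 1 ≤ i) (hir : i ≤ r' + 1) (hj : 1 ≤ j) (hjr : j ≤ r'' + 1)
    (hij : i + j = a + 1) : phi0 r' r'' k l a ≤ k i + l j :=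
  Nat.sInf_le ⟨i, j, hi, hir, hj, hjr, hij, rfl⟩

theorem phiPoly0_eq_prod_range (hk0 : k (r' + 1) = 0) (hl0 : l (r'' + 1) = 0) :
    phiPoly0 d r' r'' k l =
      ∏ s ∈ range (r' + r'' + 1), pochPoly ((d : ℂ) * s / 2) (phi0 r' r'' k l (s + 1)) := by
  have htop : phi0 r' r'' k l (r' + r'' + 1) = 0 :=
    Nat.eq_zero_of_le_zero <| by
      simpa [hk0, hl0] using phi0_le r' r'' k l (a := r' + r'' + 1) (by omega) le_rfl (by omega)
        le_rfl (by omega)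
  rw [prod_range_succ, htop, pochPoly_zero, mul_one, phiPoly0, ← Ico_add_one_right_eq_Icc,
    prod_Ico_eq_prod_range, Nat.add_sub_cancel]
  refine prod_congr rfl fun s _ => ?_
  rw [add_comm 1 s]
  push_cast
  ring_nf

theorem denom0_monic : (denom0 d r' r'' k l).Monic :=
  monic_prod_of_monic _ _ fun _ _ => monic_prod_of_monic _ _ fun _ _ => pochPoly_monic _ _

theorem numer0_monic : (numer0 d r' r'' k l).Monic :=
  monic_prod_of_monic _ _ fun _ _ => monic_prod_of_monic _ _ fun _ _ => pochPoly_monic _ _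

theorem phiPoly0_monic : (phiPoly0 d r' r'' k l).Monic :=
  monic_prod_of_monic _ _ fun _ _ => pochPoly_monic _ _

theorem rootMultiplicity_denom0 (z : ℂ) :
    rootMultiplicity z (denom0 d r' r'' k l) =
      ∑ s ∈ range (r' + r'' + 1), rootMultiplicity z (denomDiag d r' r'' k l s) := by
  have h := denom0_eq_prod_denomDiag d r' r'' k l
  rw [h, rootMultiplicity_prod _ _ (h ▸ (denom0_monic d r' r'' k l).ne_zero)]

theorem rootMultiplicity_numer0 (z : ℂ) :
    rootMultiplicity z (numer0 d r' r'' k l) =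
      ∑ s ∈ range (r' + r'' + 1), rootMultiplicity z (numerDiag d r' r'' k l s) := by
  have h := numer0_eq_prod_numerDiag d r' r'' k l
  rw [h, rootMultiplicity_prod _ _ (h ▸ (numer0_monic d r' r'' k l).ne_zero)]

end Diagonals

section Roots

variable {d r' r'' m₁' m₂' m₁'' m₂'' : ℕ} {k l : ℕ → ℕ}

theorem exists_rootMultiplicity_denomDiag_lt_of_isRoot (hk0 : k (r' + 1) = 0)
    (hl0 : l (r'' + 1) = 0) {R : ℂ[X]}
    (hR : R * denom0 d r' r'' k l = phiPoly0 d r' r'' k l * numer0 d r' r'' k l) {z : ℂ}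
    (hz : R.IsRoot z) :
    ∃ s ≤ r' + r'', rootMultiplicity z (denomDiag d r' r'' k l s) <
      rootMultiplicity z (pochPoly ((d : ℂ) * s / 2) (phi0 r' r'' k l (s + 1))) +
        rootMultiplicity z (numerDiag d r' r'' k l s) := by
  have hphi := (phiPoly0_monic d r' r'' k l).ne_zero
  have hnum := (numer0_monic d r' r'' k l).ne_zero
  have hR0 : R ≠ 0 := by
    rintro rfl
    exact mul_ne_zero hphi hnum (by rw [← hR, zero_mul])
  have hmult := congrArg (rootMultiplicity z) hR
  rw [rootMultiplicity_mul (mul_ne_zero hR0 (denom0_monic d r' r'' k l).ne_zero),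
    rootMultiplicity_mul (mul_ne_zero hphi hnum), rootMultiplicity_denom0, rootMultiplicity_numer0,
    phiPoly0_eq_prod_range d r' r'' k l hk0 hl0, rootMultiplicity_prod_pochPoly,
    ← sum_add_distrib] at hmult
  have := (rootMultiplicity_pos hR0).mpr hz
  obtain ⟨s, hs, hlt⟩ := exists_lt_of_sum_lt (s := range (r' + r'' + 1))
    (f := fun s => rootMultiplicity z (denomDiag d r' r'' k l s))
    (g := fun s => rootMultiplicity z (pochPoly ((d : ℂ) * s / 2) (phi0 r' r'' k l (s + 1))) +
      rootMultiplicity z (numerDiag d r' r'' k l s)) (by omega)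
  exact ⟨s, Nat.lt_succ_iff.mp (mem_range.mp hs), hlt⟩

theorem exists_descents_of_rootMultiplicity_denomDiag_lt {s : ℕ} {z : ℂ} (hs : s ≤ r' + r'')
    (h : rootMultiplicity z (denomDiag d r' r'' k l s) <
      rootMultiplicity z (pochPoly ((d : ℂ) * s / 2) (phi0 r' r'' k l (s + 1))) +
        rootMultiplicity z (numerDiag d r' r'' k l s)) :
    ∃ t i₁ i₂ : ℕ, z = (d : ℂ) * s / 2 - t ∧ max 1 (s + 1 - r'') ≤ i₁ ∧ i₁ ≤ i₂ ∧
      i₂ < min (s + 1) (r' + 1) ∧ k i₁ + l (s + 2 - i₁) ≤ t ∧ t < k i₁ + l (s + 1 - i₁) ∧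
      k (i₂ + 1) + l (s + 1 - i₂) ≤ t ∧ t < k i₂ + l (s + 1 - i₂) := by
  rw [denomDiag, numerDiag, rootMultiplicity_prod_pochPoly, rootMultiplicity_prod_pochPoly] at h
  set lo := max 1 (s + 1 - r'')
  set hi := min (s + 1) (r' + 1)
  obtain ⟨t, rfl⟩ : ∃ t : ℕ, z = (d : ℂ) * s / 2 - t := by
    rcases Nat.eq_zero_or_pos
      (rootMultiplicity z (pochPoly ((d : ℂ) * s / 2) (phi0 r' r'' k l (s + 1)))) with h0 | hpos
    · have hN : ∑ i ∈ Ico lo hi,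
          rootMultiplicity z (pochPoly ((d : ℂ) * s / 2) (k i + l (s + 1 - i))) ≠ 0 := by omega
      obtain ⟨i, -, hi⟩ := exists_ne_zero_of_sum_ne_zero hN
      exact exists_eq_sub_of_rootMultiplicity_pochPoly_pos (Nat.pos_of_ne_zero hi)
    · exact exists_eq_sub_of_rootMultiplicity_pochPoly_pos hpos
  simp only [rootMultiplicity_pochPoly_sub_natCast] at h
  -- `φ₀` is the least length on the antidiagonal, so `t < φ₀` would make every factor of
  -- `denomDiag` vanish at `z`, one more than the factors of `numerDiag`
  have hphi : phi0 r' r'' k l (s + 1) ≤ t := by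
    by_contra! hlt
    have hD : ∑ i ∈ Icc lo hi, (if t < k i + l (s + 2 - i) then 1 else 0) = hi + 1 - lo := by
      rw [sum_congr rfl fun i hi => if_pos (hlt.trans_le (by
        rw [mem_Icc] at hi
        exact phi0_le r' r'' k l (by omega) (by omega) (by omega) (by omega) (by omega))),
        sum_const, smul_eq_mul, mul_one, Nat.card_Icc]
    have hN := sum_le_card_nsmul (Ico lo hi) (fun i => if t < k i + l (s + 1 - i) then 1 else 0) 1
      fun i _ => by split_ifs <;> omega
    rw [Nat.card_Ico, smul_eq_mul, mul_one] at hN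
    have : (if t < phi0 r' r'' k l (s + 1) then 1 else 0) ≤ 1 := by split_ifs <;> omega
    omega
  rw [if_neg hphi.not_gt, zero_add] at h
  obtain ⟨i₁, i₂, h₁, h₁₂, h₂, hlt₁, hlt₂⟩ := exists_lt_lt_of_sum_Icc_lt_sum_Ico _ _ h
  rw [show s + 2 - (i₂ + 1) = s + 1 - i₂ by omega] at hlt₂
  refine ⟨t, i₁, i₂, rfl, h₁, h₁₂, h₂, ?_⟩
  split_ifs at hlt₁ hlt₂ <;> omega

theorem exists_bounds_of_isRoot (hk : AntitoneOn k (Set.Icc 1 (r' + 1)))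
    (hl : AntitoneOn l (Set.Icc 1 (r'' + 1))) (hk0 : k (r' + 1) = 0) (hl0 : l (r'' + 1) = 0)
    (hm₂' : m₂' ≤ r') (hm₂'' : m₂'' ≤ r'')
    (hkc : ∀ a, 1 ≤ a → a ≤ m₁' → k a = k 1) (hlc : ∀ a, 1 ≤ a → a ≤ m₁'' → l a = l 1)
    (hk2 : k (m₂' + 1) = 0) (hl2 : l (m₂'' + 1) = 0) {R : ℂ[X]}
    (hR : R * denom0 d r' r'' k l = phiPoly0 d r' r'' k l * numer0 d r' r'' k l) {z : ℂ}
    (hz : R.IsRoot z) :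
    ∃ s t : ℕ, z = (d : ℂ) * s / 2 - t ∧ t < k 1 + l 1 ∧ max (k m₂') (l m₂'') ≤ t ∧
      max m₁' m₁'' ≤ s ∧ s + 1 ≤ m₂' + m₂'' ∧ 1 ≤ k 1 ∧ 1 ≤ l 1 := by
  obtain ⟨s, hs, hlt⟩ := exists_rootMultiplicity_denomDiag_lt_of_isRoot hk0 hl0 hR hz
  obtain ⟨t, i₁, i₂, rfl, hi₁, hi₁₂, hi₂, hd₁, hn₁, hd₂, hn₂⟩ :=
    exists_descents_of_rootMultiplicity_denomDiag_lt hs hlt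
  rw [show s + 2 - i₁ = s + 1 - i₁ + 1 by omega] at hd₁
  obtain ⟨hj₁m₁, hj₁m₂⟩ := hl.mem_Icc_of_apply_add_one_lt hlc hl2 (i := s + 1 - i₁)
    (by omega) (by omega) (by omega)
  obtain ⟨hi₂m₁, hi₂m₂⟩ := hk.mem_Icc_of_apply_add_one_lt hkc hk2 (i := i₂)
    (by omega) (by omega) (by omega)
  have hk₁ : k i₁ ≤ k 1 := hk ⟨le_rfl, by omega⟩ ⟨by omega, by omega⟩ (by omega)
  have hk₂ : k i₂ ≤ k 1 := hk ⟨le_rfl, by omega⟩ ⟨by omega, by omega⟩ (by omega)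
  have hl₁ : l (s + 1 - i₁) ≤ l 1 := hl ⟨le_rfl, by omega⟩ ⟨by omega, by omega⟩ (by omega)
  have hkm : k m₂' ≤ k i₁ := hk ⟨by omega, by omega⟩ ⟨by omega, by omega⟩ (by omega)
  have hlm : l m₂'' ≤ l (s + 1 - i₂) := hl ⟨by omega, by omega⟩ ⟨by omega, by omega⟩ (by omega)
  exact ⟨s, t, rfl, by omega, by omega, by omega, by omega, by omega, by omega⟩

end Roots

section Poles

variable {d r' r'' : ℕ} {k l : ℕ → ℕ}

theorem exists_of_phi0_eq_zero {a : ℕ} (ha : 1 ≤ a) (har : a ≤ r' + r'' + 1)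
    (h : phi0 r' r'' k l a = 0) :
    ∃ i j, 1 ≤ i ∧ i ≤ r' + 1 ∧ 1 ≤ j ∧ j ≤ r'' + 1 ∧ i + j = a + 1 ∧ k i = 0 ∧ l j = 0 := by
  rcases Nat.sInf_eq_zero.mp h with ⟨i, j, hi, hir, hj, hjr, hij, h0⟩ | hempty
  · exact ⟨i, j, hi, hir, hj, hjr, hij, by omega, by omega⟩
  · refine absurd hempty (Set.nonempty_iff_ne_empty.mp ⟨_, min a (r' + 1), a + 1 - min a (r' + 1),
      ?_, ?_, ?_, ?_, ?_, rfl⟩) <;> omega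

theorem numerDiag_eq_denomDiag (hk : AntitoneOn k (Set.Icc 1 (r' + 1)))
    (hl : AntitoneOn l (Set.Icc 1 (r'' + 1))) {s i₀ j₀ : ℕ} (hs : s ≤ r' + r'')
    (hi₀ : 1 ≤ i₀) (hi₀r : i₀ ≤ r' + 1) (hj₀ : 1 ≤ j₀) (hj₀r : j₀ ≤ r'' + 1)
    (hij : i₀ + j₀ ≤ s + 2) (hki : k i₀ = 0) (hlj : l j₀ = 0) :
    numerDiag d r' r'' k l s = denomDiag d r' r'' k l s := by
  -- the factor of `denomDiag` at `p` is `1`; before `p` the factors agree, after `p` they shift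
  -- by one
  set p := min (s + 2 - j₀) (r' + 1)
  have hk0 : ∀ i, p ≤ i → i ≤ r' + 1 → k i = 0 := fun i hpi hir =>
    hk.eq_zero_of_le hi₀ (by omega) hir hki
  have hl0 : ∀ j, s + 2 - p ≤ j → j ≤ r'' + 1 → l j = 0 := fun j hpj hjr =>
    hl.eq_zero_of_le hj₀ (by omega) hjr hlj
  refine prod_Ico_eq_prod_Icc_of_eq_one _ _ (p := p) (by omega) (by omega) ?_ ?_ ?_
  · rw [hk0 p le_rfl (by omega), hl0 _ le_rfl (by omega), pochPoly_zero]
  · intro i hi hip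
    rw [hl0 (s + 1 - i) (by omega) (by omega), hl0 (s + 2 - i) (by omega) (by omega)]
  · intro i hpi hi
    rw [hk0 i hpi (by omega), hk0 (i + 1) (by omega) (by omega),
      show s + 2 - (i + 1) = s + 1 - i by omega]

theorem numerDiag_eq_denomDiag_of_phi0_eq_zero (hk : AntitoneOn k (Set.Icc 1 (r' + 1)))
    (hl : AntitoneOn l (Set.Icc 1 (r'' + 1))) {m s : ℕ} (hφ : phi0 r' r'' k l (m + 1) = 0)
    (hms : m ≤ s) (hs : s ≤ r' + r'') :
    numerDiag d r' r'' k l s = denomDiag d r' r'' k l s := by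
  obtain ⟨i₀, j₀, hi₀, hi₀r, hj₀, hj₀r, hij, hki, hlj⟩ :=
    exists_of_phi0_eq_zero (by omega) (by omega) hφ
  exact numerDiag_eq_denomDiag hk hl hs hi₀ hi₀r hj₀ hj₀r (by omega) hki hlj

theorem rootMultiplicity_numerDiag_lt_denomDiag {s : ℕ} (hs : s ≤ r' + r'')
    (hφ : phi0 r' r'' k l (s + 1) ≠ 0) :
    rootMultiplicity ((d : ℂ) * s / 2) (numerDiag d r' r'' k l s) <
      rootMultiplicity ((d : ℂ) * s / 2) (denomDiag d r' r'' k l s) := by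
  rw [numerDiag, denomDiag, rootMultiplicity_prod_pochPoly, rootMultiplicity_prod_pochPoly]
  set lo := max 1 (s + 1 - r'')
  set hi := min (s + 1) (r' + 1)
  have hself (w : ℕ) : rootMultiplicity ((d : ℂ) * s / 2) (pochPoly ((d : ℂ) * s / 2) w) =
      if 0 < w then 1 else 0 := by
    simpa using rootMultiplicity_pochPoly_sub_natCast ((d : ℂ) * s / 2) 0 w
  have hD : ∑ i ∈ Icc lo hi,
      rootMultiplicity ((d : ℂ) * s / 2) (pochPoly ((d : ℂ) * s / 2) (k i + l (s + 2 - i))) =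
        hi + 1 - lo := by
    rw [sum_congr rfl fun i hi => (hself _).trans (if_pos ?_), sum_const, smul_eq_mul, mul_one,
      Nat.card_Icc]
    rw [mem_Icc] at hi
    exact (Nat.pos_of_ne_zero hφ).trans_le
      (phi0_le r' r'' k l (by omega) (by omega) (by omega) (by omega) (by omega))
  have hN := sum_le_card_nsmul (Ico lo hi) (fun i => rootMultiplicity ((d : ℂ) * s / 2)
    (pochPoly ((d : ℂ) * s / 2) (k i + l (s + 1 - i)))) 1
    fun i _ => rootMultiplicity_pochPoly_le_one _ _ _
  rw [Nat.card_Ico, smul_eq_mul, mul_one] at hN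
  omega

theorem rootMultiplicity_numer0_eq_denom0 (hd : 0 < d) (hk : AntitoneOn k (Set.Icc 1 (r' + 1)))
    (hl : AntitoneOn l (Set.Icc 1 (r'' + 1))) {m : ℕ} (hφ : phi0 r' r'' k l (m + 1) = 0) :
    rootMultiplicity ((d : ℂ) * m / 2) (numer0 d r' r'' k l) =
      rootMultiplicity ((d : ℂ) * m / 2) (denom0 d r' r'' k l) := by
  rw [rootMultiplicity_numer0, rootMultiplicity_denom0]
  refine sum_congr rfl fun s hs => ?_
  rcases lt_or_ge s m with hsm | hms
  · rw [numerDiag, denomDiag, rootMultiplicity_prod_pochPoly_eq_zero_of_lt _ _ hd hsm,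
      rootMultiplicity_prod_pochPoly_eq_zero_of_lt _ _ hd hsm]
  · rw [numerDiag_eq_denomDiag_of_phi0_eq_zero hk hl hφ hms (by simpa [Nat.lt_succ_iff] using hs)]

theorem rootMultiplicity_numer0_lt_denom0 (hd : 0 < d) (hk : AntitoneOn k (Set.Icc 1 (r' + 1)))
    (hl : AntitoneOn l (Set.Icc 1 (r'' + 1))) {m : ℕ} (hm : m ≤ r' + r'')
    (hφ : phi0 r' r'' k l (m + 2) = 0) (hφm : phi0 r' r'' k l (m + 1) ≠ 0) :
    rootMultiplicity ((d : ℂ) * m / 2) (numer0 d r' r'' k l) <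
      rootMultiplicity ((d : ℂ) * m / 2) (denom0 d r' r'' k l) := by
  rw [rootMultiplicity_numer0, rootMultiplicity_denom0]
  refine sum_lt_sum (fun s hs => ?_) ⟨m, by simpa [Nat.lt_succ_iff] using hm,
    rootMultiplicity_numerDiag_lt_denomDiag hm hφm⟩
  rcases lt_trichotomy s m with hsm | rfl | hms
  · rw [numerDiag, denomDiag, rootMultiplicity_prod_pochPoly_eq_zero_of_lt _ _ hd hsm,
      rootMultiplicity_prod_pochPoly_eq_zero_of_lt _ _ hd hsm]
  · exact (rootMultiplicity_numerDiag_lt_denomDiag hm hφm).le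
  · rw [numerDiag_eq_denomDiag_of_phi0_eq_zero hk hl hφ hms (by simpa [Nat.lt_succ_iff] using hs)]

end Poles

theorem zeroes_nonsimple_general (d r' r'' : ℕ) (hd : 0 < d)
    (k l : ℕ → ℕ)
    (hk : ∀ i j, 1 ≤ i → i ≤ j → j ≤ r' → k j ≤ k i) (hk0 : k (r' + 1) = 0)
    (hl : ∀ i j, 1 ≤ i → i ≤ j → j ≤ r'' → l j ≤ l i) (hl0 : l (r'' + 1) = 0)
    (m₁' m₂' m₁'' m₂'' : ℕ)
    (hm3' : m₂' ≤ r')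
    (hm3'' : m₂'' ≤ r'')
    (hkc : ∀ a, 1 ≤ a → a ≤ m₁' → k a = k 1)
    (hlc : ∀ a, 1 ≤ a → a ≤ m₁'' → l a = l 1)
    (hk2 : k (m₂' + 1) = 0) (hl2 : l (m₂'' + 1) = 0)
    (R : Polynomial ℂ)
    (hR : R * denom0 d r' r'' k l = phiPoly0 d r' r'' k l * numer0 d r' r'' k l) :
    ((1 ≤ k 1 → 1 ≤ l 1 → ∀ z : ℂ, R.IsRoot z → z.im = 0 ∧
        (d : ℝ) / 2 * (max m₁' m₁'' : ℕ) - ((k 1 : ℝ) + (l 1 : ℝ)) + 1 ≤ z.re ∧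
        z.re ≤ (d : ℝ) / 2 * ((m₂' : ℝ) + (m₂'' : ℝ) - 1) - (max (k m₂') (l m₂'') : ℕ)) ∧
      (k 1 = 0 ∨ l 1 = 0 → R = 1)) ∧
    ∀ m : ℕ, 1 ≤ m → m ≤ r' + r'' - 1 →
      phi0 r' r'' k l (m + 1) = 0 → phi0 r' r'' k l m ≠ 0 →
      (Polynomial.rootMultiplicity ((d : ℂ) * (m : ℂ) / 2) (numer0 d r' r'' k l) =
        Polynomial.rootMultiplicity ((d : ℂ) * (m : ℂ) / 2) (denom0 d r' r'' k l) ∧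
       Polynomial.rootMultiplicity ((d : ℂ) * ((m : ℂ) - 1) / 2) (numer0 d r' r'' k l) <
        Polynomial.rootMultiplicity ((d : ℂ) * ((m : ℂ) - 1) / 2) (denom0 d r' r'' k l)) := by
  have hk' := antitoneOn_Icc_one_add_one (fun i hi j hj hij => hk i j hi.1 hij hj.2) hk0
  have hl' := antitoneOn_Icc_one_add_one (fun i hi j hj hij => hl i j hi.1 hij hj.2) hl0
  have hroot := fun z (hz : R.IsRoot z) =>
    exists_bounds_of_isRoot hk' hl' hk0 hl0 hm3' hm3'' hkc hlc hk2 hl2 hR hz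
  refine ⟨⟨fun _ _ z hz => ?_, fun h => ?_⟩, fun m hm hmr hφ hφm => ?_⟩
  · obtain ⟨s, t, rfl, ht, hmt, hms, hsm, -, -⟩ := hroot z hz
    have hre : ((d : ℂ) * s / 2 - t).re = d / 2 * s - t := by simp; ring
    refine ⟨by simp, ?_, ?_⟩ <;> rw [hre]
    · have : (d : ℝ) / 2 * (max m₁' m₁'' : ℕ) ≤ d / 2 * s := by gcongr
      have : (t : ℝ) + 1 ≤ k 1 + l 1 := by exact_mod_cast ht
      linarith
    · have : (d : ℝ) / 2 * s ≤ d / 2 * (m₂' + m₂'' - 1) := by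
        gcongr; linarith [(by exact_mod_cast hsm : (s : ℝ) + 1 ≤ m₂' + m₂'')]
      have : ((max (k m₂') (l m₂'') : ℕ) : ℝ) ≤ t := by exact_mod_cast hmt
      linarith
  · have hmonic : R.Monic := (denom0_monic d r' r'' k l).of_mul_monic_right
      (hR ▸ (phiPoly0_monic d r' r'' k l).mul (numer0_monic d r' r'' k l))
    refine hmonic.eq_one_of_forall_not_isRoot fun z hz => ?_
    obtain ⟨-, -, -, -, -, -, -, hk1, hl1⟩ := hroot z hz
    omega
  · obtain ⟨n, rfl⟩ : ∃ n, m = n + 1 := ⟨m - 1, by omega⟩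
    have hcenter : (d : ℂ) * ((n + 1 : ℕ) - 1) / 2 = (d : ℂ) * n / 2 := by push_cast; ring
    rw [hcenter]
    exact ⟨rootMultiplicity_numer0_eq_denom0 hd hk' hl' hφ,
      rootMultiplicity_numer0_lt_denom0 hd hk' hl' (by omega) hφ hφm⟩

/-- Proposition 5.4: location of the zeros of `(λ)_{φ₀(k,l),d}·C₀^d(λ,k,l)`, and the
poles/nonvanishing of `C₀^d` at `λ = dm/2`, `d(m−1)/2`. -/
theorem zeroes_nonsimple (d r' r'' : ℕ) (hd : 0 < d) (hr' : 0 < r') (hr'' : 0 < r'')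
    (k l : ℕ → ℕ)
    (hk : ∀ i j, 1 ≤ i → i ≤ j → j ≤ r' → k j ≤ k i) (hk0 : k (r' + 1) = 0)
    (hl : ∀ i j, 1 ≤ i → i ≤ j → j ≤ r'' → l j ≤ l i) (hl0 : l (r'' + 1) = 0)
    (m₁' m₂' m₁'' m₂'' : ℕ)
    (hm1' : 1 ≤ m₁') (hm2' : m₁' ≤ m₂') (hm3' : m₂' ≤ r')
    (hm1'' : 1 ≤ m₁'') (hm2'' : m₁'' ≤ m₂'') (hm3'' : m₂'' ≤ r'')
    (hkc : ∀ a, 1 ≤ a → a ≤ m₁' → k a = k 1)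
    (hlc : ∀ a, 1 ≤ a → a ≤ m₁'' → l a = l 1)
    (hk2 : k (m₂' + 1) = 0) (hl2 : l (m₂'' + 1) = 0)
    (R : Polynomial ℂ)
    (hR : R * denom0 d r' r'' k l = phiPoly0 d r' r'' k l * numer0 d r' r'' k l) :
    ((1 ≤ k 1 → 1 ≤ l 1 → ∀ z : ℂ, R.IsRoot z → z.im = 0 ∧
        (d : ℝ) / 2 * (max m₁' m₁'' : ℕ) - ((k 1 : ℝ) + (l 1 : ℝ)) + 1 ≤ z.re ∧
        z.re ≤ (d : ℝ) / 2 * ((m₂' : ℝ) + (m₂'' : ℝ) - 1) - (max (k m₂') (l m₂'') : ℕ)) ∧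
      (k 1 = 0 ∨ l 1 = 0 → R = 1)) ∧
    ∀ m : ℕ, 1 ≤ m → m ≤ r' + r'' - 1 →
      phi0 r' r'' k l (m + 1) = 0 → phi0 r' r'' k l m ≠ 0 →
      (Polynomial.rootMultiplicity ((d : ℂ) * (m : ℂ) / 2) (numer0 d r' r'' k l) =
        Polynomial.rootMultiplicity ((d : ℂ) * (m : ℂ) / 2) (denom0 d r' r'' k l) ∧
       Polynomial.rootMultiplicity ((d : ℂ) * ((m : ℂ) - 1) / 2) (numer0 d r' r'' k l) <
        Polynomial.rootMultiplicity ((d : ℂ) * ((m : ℂ) - 1) / 2) (denom0 d r' r'' k l)) :=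
  zeroes_nonsimple_general d r' r'' hd k l hk hk0 hl hl0 m₁' m₂' m₁'' m₂'' hm3' hm3'' hkc hlc hk2
    hl2 R hR
end

section
/- Let d, r', r'' be positive integers with r' ≥ 1, k ∈ ℤ_{++}^{r'} and l ∈ ℤ_{++}^{r''} (with conventions k_{r'+1} := 0, l_{r''+1} := 0). Then the following identity of rational functions of λ holds (equivalently, the polynomial identity obtained by cross-multiplying denominators): [∏_{a=1}^{r'+r''}(λ − d(a−1)/2)_{k_{r'}}] · C₀^d(λ, (k₁,…,k_{r'}), l) = C₀^d(λ + k_{r'}, (k₁−k_{r'}, …, k_{r'−1}−k_{r'}), l) · ∏_{j=1}^{r''}(λ + l_j − d(r'+j−1)/2)_{k_{r'}}, where on the right-hand side C₀^d is formed for the (r'−1)-tuple (k₁−k_{r'},…,k_{r'−1}−k_{r'}) ∈ ℤ_{++}^{r'−1} together with l. -/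
open Polynomial Finset

/-!
Put `c = k_{r'} ≤ k_i`. Each factor `(λ - ν)_{k_i + l_j}` splits as
`(λ - ν)_c · (λ - ν + c)_{k_i - c + l_j}`. The second factors make up `C₀^d(λ + c, k - c, l)`; the
first factors cancel against the prefactor `∏_a (λ - d(a-1)/2)_c`, and what is left over (from the
row `i = r'` above, the row `i = r' + 1` below and the tail `a > r'` of the prefactor) is matched by
`(λ - ν)_c (λ - ν + c)_{l_j} = (λ - ν + l_j)_c (λ - ν)_{l_j}`. Only the fact that the shifts depend
on `i + j` matters, so the argument is run for an arbitrary `θ` in place of `x ↦ d x / 2`.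
-/

/-- `(p)_m := ∏_{t=0}^{m−1}(p + t)` for a polynomial `p ∈ ℂ[X]`. -/
noncomputable def pochOf (p : Polynomial ℂ) (m : ℕ) : Polynomial ℂ :=
  ∏ t ∈ Finset.range m, (p + (t : Polynomial ℂ))

theorem Finset.prod_Icc_one_add {M : Type*} [CommMonoid M] (f : ℕ → M) (m n : ℕ) :
    ∏ a ∈ Icc 1 (m + n), f a = (∏ a ∈ Icc 1 m, f a) * ∏ j ∈ Icc 1 n, f (m + j) := by
  induction n with
  | zero => simp
  | succ n ih =>
    rw [← add_assoc, prod_Icc_succ_top (by omega), ih, prod_Icc_succ_top (by omega), mul_assoc]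
    rfl

theorem pochOf_add (p : Polynomial ℂ) (m n : ℕ) :
    pochOf p (m + n) = pochOf p m * pochOf (p + C (m : ℂ)) n := by
  unfold pochOf
  rw [prod_range_add]
  congr 1
  refine prod_congr rfl fun t _ => ?_
  rw [C_eq_natCast]
  push_cast
  ring

theorem pochOf_X_sub_C_add (ν : ℂ) (m n : ℕ) :
    pochOf (X - C ν) (m + n) = pochOf (X - C ν) m * pochOf (X - C (ν - m)) n := by
  rw [pochOf_add, map_sub]
  ring_nf

theorem pochOf_X_sub_C_mul_comm (ν : ℂ) (m n : ℕ) :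
    pochOf (X - C ν) m * pochOf (X - C (ν - m)) n =
      pochOf (X - C (ν - n)) m * pochOf (X - C ν) n := by
  rw [← pochOf_X_sub_C_add, mul_comm, ← pochOf_X_sub_C_add, add_comm]

theorem pochOf_X_add_C_sub (a b : ℂ) (m : ℕ) :
    pochOf (X + C (a - b)) m = pochOf (X - C (b - a)) m := by
  rw [map_sub, map_sub]
  ring_nf

theorem prod_prod_pochOf_split {ι κ : Type*} (I : Finset ι) (J : Finset κ) (ν : ι → κ → ℂ)
    (k : ι → ℕ) (l : κ → ℕ) (c : ℕ) (hc : ∀ i ∈ I, c ≤ k i) :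
    ∏ i ∈ I, ∏ j ∈ J, pochOf (X - C (ν i j)) (k i + l j) =
      (∏ i ∈ I, ∏ j ∈ J, pochOf (X - C (ν i j)) c) *
        ∏ i ∈ I, ∏ j ∈ J, pochOf (X - C (ν i j - c)) (k i - c + l j) := by
  simp only [← prod_mul_distrib, ← pochOf_X_sub_C_add]
  refine prod_congr rfl fun i hi => prod_congr rfl fun j _ => ?_
  have := hc i hi
  congr 1
  omega

theorem prod_pochOf_const_recursion (θ : ℂ → ℂ) (s r : ℕ) (k l : ℕ → ℕ)
    (hk : ∀ i ∈ Icc 1 (s + 1), k (s + 1) ≤ k i) (hk0 : k (s + 1 + 1) = 0) (hl0 : l (r + 1) = 0) :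
    (∏ a ∈ Icc 1 (s + 1 + r), pochOf (X - C (θ ((a : ℂ) - 1))) (k (s + 1))) *
      (∏ i ∈ Icc 1 (s + 1), ∏ j ∈ Icc 1 r,
        pochOf (X - C (θ ((i : ℂ) + (j : ℂ) - 1))) (k i + l j)) *
      (∏ i ∈ Icc 1 (s + 1), ∏ j ∈ Icc 1 (r + 1),
        pochOf (X - C (θ ((i : ℂ) + (j : ℂ) - 2) - k (s + 1))) (k i - k (s + 1) + l j)) =
    (∏ i ∈ Icc 1 s, ∏ j ∈ Icc 1 r,
        pochOf (X - C (θ ((i : ℂ) + (j : ℂ) - 1) - k (s + 1))) (k i - k (s + 1) + l j)) *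
      (∏ j ∈ Icc 1 r,
        pochOf (X - C (θ (((s + 1 : ℕ) : ℂ) + (j : ℂ) - 1) - l j)) (k (s + 1))) *
      (∏ i ∈ Icc 1 (s + 1 + 1), ∏ j ∈ Icc 1 (r + 1),
        pochOf (X - C (θ ((i : ℂ) + (j : ℂ) - 2))) (k i + l j)) := by
  set c := k (s + 1)
  have hprefactor : ∏ a ∈ Icc 1 (s + 1 + r), pochOf (X - C (θ ((a : ℂ) - 1))) c =
      (∏ i ∈ Icc 1 (s + 1), pochOf (X - C (θ ((i : ℂ) - 1))) c) *
        ∏ j ∈ Icc 1 r, pochOf (X - C (θ (((s + 1 : ℕ) : ℂ) + j - 1))) c := by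
    rw [prod_Icc_one_add]
    congr 1
    exact prod_congr rfl fun j _ => by push_cast; ring_nf
  have hnum : ∏ i ∈ Icc 1 (s + 1), ∏ j ∈ Icc 1 r,
        pochOf (X - C (θ ((i : ℂ) + j - 1))) (k i + l j) =
      (∏ i ∈ Icc 1 (s + 1), ∏ j ∈ Icc 1 r, pochOf (X - C (θ ((i : ℂ) + j - 1))) c) *
        ((∏ i ∈ Icc 1 s, ∏ j ∈ Icc 1 r,
          pochOf (X - C (θ ((i : ℂ) + j - 1) - c)) (k i - c + l j)) *
        ∏ j ∈ Icc 1 r, pochOf (X - C (θ (((s + 1 : ℕ) : ℂ) + j - 1) - c)) (l j)) := by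
    rw [prod_prod_pochOf_split _ _ _ _ _ _ hk]
    congr 1
    rw [prod_Icc_succ_top (by omega), Nat.sub_self]
    simp only [zero_add]
  have hden_last_row : ∏ i ∈ Icc 1 (s + 1 + 1), ∏ j ∈ Icc 1 (r + 1),
        pochOf (X - C (θ ((i : ℂ) + j - 2))) (k i + l j) =
      (∏ i ∈ Icc 1 (s + 1), ∏ j ∈ Icc 1 (r + 1),
        pochOf (X - C (θ ((i : ℂ) + j - 2))) (k i + l j)) *
        ∏ j ∈ Icc 1 r, pochOf (X - C (θ (((s + 1 : ℕ) : ℂ) + j - 1))) (l j) := by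
    rw [prod_Icc_succ_top (by omega)]
    refine congrArg (_ * ·) ?_
    rw [prod_Icc_succ_top (by omega), hk0, hl0, pochOf, range_zero, prod_empty, mul_one]
    exact prod_congr rfl fun j _ => by push_cast; ring_nf
  have hden_first_col : ∏ i ∈ Icc 1 (s + 1), ∏ j ∈ Icc 1 (r + 1),
        pochOf (X - C (θ ((i : ℂ) + j - 2))) c =
      (∏ i ∈ Icc 1 (s + 1), pochOf (X - C (θ ((i : ℂ) - 1))) c) *
        ∏ i ∈ Icc 1 (s + 1), ∏ j ∈ Icc 1 r, pochOf (X - C (θ ((i : ℂ) + j - 1))) c := by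
    rw [← prod_mul_distrib]
    refine prod_congr rfl fun i _ => ?_
    rw [add_comm r, prod_Icc_one_add, Icc_self, prod_singleton]
    exact congrArg₂ (· * ·) (by push_cast; ring_nf) (prod_congr rfl fun j _ => by push_cast; ring_nf)
  have hswap : (∏ j ∈ Icc 1 r, pochOf (X - C (θ (((s + 1 : ℕ) : ℂ) + j - 1))) c) *
        ∏ j ∈ Icc 1 r, pochOf (X - C (θ (((s + 1 : ℕ) : ℂ) + j - 1) - c)) (l j) =
      (∏ j ∈ Icc 1 r, pochOf (X - C (θ (((s + 1 : ℕ) : ℂ) + j - 1) - l j)) c) *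
        ∏ j ∈ Icc 1 r, pochOf (X - C (θ (((s + 1 : ℕ) : ℂ) + j - 1))) (l j) := by
    simp only [← prod_mul_distrib, pochOf_X_sub_C_mul_comm]
  rw [hprefactor, hnum, hden_last_row, prod_prod_pochOf_split _ _ _ _ _ _ hk, hden_first_col]
  grind

theorem nonsimple_const_recursion_general (d r' r'' : ℕ) (hr' : 1 ≤ r')
    (k l : ℕ → ℕ)
    (hk : ∀ i j, 1 ≤ i → i ≤ j → j ≤ r' → k j ≤ k i) (hk0 : k (r' + 1) = 0)
    (hl0 : l (r'' + 1) = 0) :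
    (∏ a ∈ Finset.Icc 1 (r' + r''),
        pochOf (Polynomial.X - Polynomial.C ((d : ℂ) * ((a : ℂ) - 1) / 2)) (k r')) *
      (∏ i ∈ Finset.Icc 1 r', ∏ j ∈ Finset.Icc 1 r'',
        pochOf (Polynomial.X -
          Polynomial.C ((d : ℂ) * ((i : ℂ) + (j : ℂ) - 1) / 2)) (k i + l j)) *
      (∏ i ∈ Finset.Icc 1 r', ∏ j ∈ Finset.Icc 1 (r'' + 1),
        pochOf (Polynomial.X +
          Polynomial.C ((k r' : ℂ) - (d : ℂ) * ((i : ℂ) + (j : ℂ) - 2) / 2))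
          (k i - k r' + l j)) =
    (∏ i ∈ Finset.Icc 1 (r' - 1), ∏ j ∈ Finset.Icc 1 r'',
        pochOf (Polynomial.X +
          Polynomial.C ((k r' : ℂ) - (d : ℂ) * ((i : ℂ) + (j : ℂ) - 1) / 2))
          (k i - k r' + l j)) *
      (∏ j ∈ Finset.Icc 1 r'',
        pochOf (Polynomial.X +
          Polynomial.C ((l j : ℂ) - (d : ℂ) * ((r' : ℂ) + (j : ℂ) - 1) / 2)) (k r')) *
      (∏ i ∈ Finset.Icc 1 (r' + 1), ∏ j ∈ Finset.Icc 1 (r'' + 1),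
        pochOf (Polynomial.X -
          Polynomial.C ((d : ℂ) * ((i : ℂ) + (j : ℂ) - 2) / 2)) (k i + l j)) := by
  obtain ⟨s, rfl⟩ : ∃ s, r' = s + 1 := ⟨r' - 1, by omega⟩
  simp only [pochOf_X_add_C_sub, Nat.add_sub_cancel]
  exact prod_pochOf_const_recursion (fun x => (d : ℂ) * x / 2) s r'' k l
    (fun i hi => hk i (s + 1) (mem_Icc.1 hi).1 (mem_Icc.1 hi).2 le_rfl) hk0 hl0

/-- The inductive step (from `r'` to `r'−1`) of Theorem 5.1:
`[∏_{a=1}^{r'+r''}(λ−d(a−1)/2)_{k_{r'}}]·C₀^d(λ,k,l)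
  = C₀^d(λ+k_{r'},(k₁−k_{r'},…,k_{r'−1}−k_{r'}),l)·∏_{j=1}^{r''}(λ+l_j−d(r'+j−1)/2)_{k_{r'}}`,
stated as the polynomial identity obtained by cross-multiplying denominators. -/
theorem nonsimple_const_recursion (d r' r'' : ℕ) (hd : 0 < d) (hr' : 1 ≤ r')
    (hr'' : 0 < r'') (k l : ℕ → ℕ)
    (hk : ∀ i j, 1 ≤ i → i ≤ j → j ≤ r' → k j ≤ k i) (hk0 : k (r' + 1) = 0)
    (hl : ∀ i j, 1 ≤ i → i ≤ j → j ≤ r'' → l j ≤ l i) (hl0 : l (r'' + 1) = 0) :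
    (∏ a ∈ Finset.Icc 1 (r' + r''),
        pochOf (Polynomial.X - Polynomial.C ((d : ℂ) * ((a : ℂ) - 1) / 2)) (k r')) *
      (∏ i ∈ Finset.Icc 1 r', ∏ j ∈ Finset.Icc 1 r'',
        pochOf (Polynomial.X -
          Polynomial.C ((d : ℂ) * ((i : ℂ) + (j : ℂ) - 1) / 2)) (k i + l j)) *
      (∏ i ∈ Finset.Icc 1 r', ∏ j ∈ Finset.Icc 1 (r'' + 1),
        pochOf (Polynomial.X +
          Polynomial.C ((k r' : ℂ) - (d : ℂ) * ((i : ℂ) + (j : ℂ) - 2) / 2))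
          (k i - k r' + l j)) =
    (∏ i ∈ Finset.Icc 1 (r' - 1), ∏ j ∈ Finset.Icc 1 r'',
        pochOf (Polynomial.X +
          Polynomial.C ((k r' : ℂ) - (d : ℂ) * ((i : ℂ) + (j : ℂ) - 1) / 2))
          (k i - k r' + l j)) *
      (∏ j ∈ Finset.Icc 1 r'',
        pochOf (Polynomial.X +
          Polynomial.C ((l j : ℂ) - (d : ℂ) * ((r' : ℂ) + (j : ℂ) - 1) / 2)) (k r')) *
      (∏ i ∈ Finset.Icc 1 (r' + 1), ∏ j ∈ Finset.Icc 1 (r'' + 1),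
        pochOf (Polynomial.X -
          Polynomial.C ((d : ℂ) * ((i : ℂ) + (j : ℂ) - 2) / 2)) (k i + l j)) :=
  nonsimple_const_recursion_general d r' r'' hr' k l hk hk0 hl0
end
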